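/- arXiv:1711.07059 — 2 statements merged into one kernel-verified Lean document; each statement's English description precedes it below -/
import Mathlib

section
/- The functor s : Game_v → Lensᵒᵖ (sending an open game G : Φ ⇸ Ψ to Φ and a morphism α to s(α)) is a Grothendieck opfibration; the functor t : Game_v → Lensᵒᵖ (sending G to Ψ and α to t(α)) is a Grothendieck fibration; and the functor Σ : Game_v → Set (sending G to Σ(G) and α to Σ(α)) is a Grothendieck fibration. In particular, for s, the opcartesian lift of a lens λ : Φ → Ψ at an open game G with s(G) = Ψ is the morphism (λ, id, id) : G → λ_!(G), where λ_!(G) : Φ ⇸ t(G) has Σ(λ_!(G)) = Σ(G), λ_!(G)(σ) = G(σ) ∘ λ, and B_{λ_!(G)}(h,k) = B_G(v_λ(h), k). -/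
/-!
Each lift is the identity in two of the three components `s`, `t`, `Σ` of a morphism, so a
factorisation of `γ` through it must copy those two components of `γ` and take the prescribed
third one. Conditions (i) and (ii) for this factor are the ones for `γ`, rewritten along the
assumed factorisation of the third component.
-/

/-- A lens between 'disets' `(X, S)` and `(Y, R)`: a view function `X → Y` and
an update function `X × R → S`. -/
structure Lens (X S Y R : Type) where
  v : X → Y
  u : X → R → S

namespace Lens

/-- The identity lens on the diset `(X, S)`. -/
def id (X S : Type) : Lens X S X S := ⟨fun x => x, fun _ s => s⟩

/-- Composition of lenses: `m.comp l` is "first `l`, then `m`". -/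
def comp {X S Y R Z Q : Type} (m : Lens Y R Z Q) (l : Lens X S Y R) : Lens X S Z Q :=
  ⟨fun x => m.v (l.v x), fun x q => l.u x (m.u (l.v x) q)⟩

theorem comp_assoc {X S Y R Z Q W T : Type} (c : Lens Z Q W T) (b : Lens Y R Z Q)
    (a : Lens X S Y R) : (c.comp b).comp a = c.comp (b.comp a) := rfl

/-- The action of the continuation functor `K` on a lens. -/
def K {X S Y R : Type} (l : Lens X S Y R) (k : Y → R) : X → S :=
  fun x => l.u x (k (l.v x))

theorem K_comp {X S Y R Z Q : Type} (m : Lens Y R Z Q) (l : Lens X S Y R) (k : Z → Q) :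
    (m.comp l).K k = l.K (m.K k) := rfl

/-- The tensor (monoidal product) of lenses. -/
def tensor {X S Y R X' S' Y' R' : Type} (l : Lens X S Y R) (l' : Lens X' S' Y' R') :
    Lens (X × X') (S × S') (Y × Y') (R × R') :=
  ⟨fun p => (l.v p.1, l'.v p.2), fun p r => (l.u p.1 r.1, l'.u p.2 r.2)⟩

end Lens

/-- An open game `G : (X,S) ⇸ (Y,R)`: a set of strategy profiles, a lens for each
strategy profile, and a best-response relation for each context `(h, k)`. -/
structure OpenGame (X S Y R : Type) where
  Strat : Type
  play : Strat → Lens X S Y R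
  B : X → (Y → R) → Strat → Strat → Prop

namespace OpenGame

/-- A state of an open game over a continuation `k`: a strategy profile `σ` with
`(σ,σ) ∈ B(h,k)` for every history `h`. -/
def IsState {X S Y R : Type} (G : OpenGame X S Y R) (σ : G.Strat) (k : Y → R) : Prop :=
  ∀ h : X, G.B h k σ σ

/-- Sequential composition `H ⊙ G` of open games. -/
def seq {X S Y R Z Q : Type} (G : OpenGame X S Y R) (H : OpenGame Y R Z Q) :
    OpenGame X S Z Q where
  Strat := G.Strat × H.Strat
  play := fun p => (H.play p.2).comp (G.play p.1)
  B := fun h k p p' =>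
    G.B h ((H.play p.2).K k) p.1 p'.1 ∧ H.B ((G.play p.1).v h) k p.2 p'.2

/-- Tensor (simultaneous play) `G₁ ⊗ G₂` of open games. -/
def tensor {X₁ S₁ Y₁ R₁ X₂ S₂ Y₂ R₂ : Type}
    (G₁ : OpenGame X₁ S₁ Y₁ R₁) (G₂ : OpenGame X₂ S₂ Y₂ R₂) :
    OpenGame (X₁ × X₂) (S₁ × S₂) (Y₁ × Y₂) (R₁ × R₂) where
  Strat := G₁.Strat × G₂.Strat
  play := fun p => (G₁.play p.1).tensor (G₂.play p.2)
  B := fun h k p p' =>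
    G₁.B h.1 (fun y => (k (y, (G₂.play p.2).v h.2)).1) p.1 p'.1 ∧
    G₂.B h.2 (fun y' => (k ((G₁.play p.1).v h.1, y')).2) p.2 p'.2

end OpenGame

/-- A (contravariant lens) morphism of open games `α : G → G'`: lenses
`s(α) : Φ' → Φ` and `t(α) : Ψ' → Ψ` and a map on strategy profiles, such that plays are
intertwined and best responses are preserved. -/
structure OGMor {X S Y R X' S' Y' R' : Type}
    (G : OpenGame X S Y R) (G' : OpenGame X' S' Y' R') where
  s : Lens X' S' X S
  t : Lens Y' R' Y R
  f : G.Strat → G'.Strat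
  comm : ∀ σ, (G.play σ).comp s = t.comp (G'.play (f σ))
  best : ∀ h k σ σ', G.B (s.v h) k σ σ' → G'.B h (t.K k) (f σ) (f σ')

/-- Vertical composition of morphisms of open games. -/
def OGMor.vcomp {X S Y R X' S' Y' R' X'' S'' Y'' R'' : Type}
    {G : OpenGame X S Y R} {G' : OpenGame X' S' Y' R'} {G'' : OpenGame X'' S'' Y'' R''}
    (β : OGMor G' G'') (α : OGMor G G') : OGMor G G'' where
  s := α.s.comp β.s
  t := α.t.comp β.t
  f := β.f ∘ α.f
  comm := by
    intro σ
    show _ = (α.t.comp β.t).comp (G''.play (β.f (α.f σ)))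
    rw [← Lens.comp_assoc, α.comm, Lens.comp_assoc, β.comm, ← Lens.comp_assoc]
  best := by
    intro h k σ σ' hB
    exact β.best h (α.t.K k) _ _ (α.best (β.s.v h) k σ σ' hB)

/-- Pushforward of an open game `G` with `s(G) = Ψ` along a lens `λ : Φ → Ψ`:
the open game `λ_!(G)` with `Σ(λ_!(G)) = Σ(G)`, `λ_!(G)(σ) = G(σ) ∘ λ` and
`B_{λ_!(G)}(h,k) = B_G(v_λ(h), k)`. -/
def OpenGame.push {X S Y R Z Q : Type} (l : Lens X S Y R) (G : OpenGame Y R Z Q) :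
    OpenGame X S Z Q where
  Strat := G.Strat
  play := fun σ => (G.play σ).comp l
  B := fun h k σ σ' => G.B (l.v h) k σ σ'

/-- The opcartesian lift of a lens `λ : Φ → Ψ` at a game `G` with `s(G) = Ψ`:
the morphism `(λ, id, id) : G → λ_!(G)`. -/
def OpenGame.pushLift {X S Y R Z Q : Type} (l : Lens X S Y R) (G : OpenGame Y R Z Q) :
    OGMor G (G.push l) where
  s := l
  t := Lens.id Z Q
  f := fun σ => σ
  comm := fun _ => rfl
  best := fun _ _ _ _ hB => hB

/-- Pullback of an open game `G'` with `t(G') = Ψ'` along a lens `λ : Ψ' → Ψ`: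
the open game `λ^*(G')` with `Σ(λ^*(G')) = Σ(G')`, `λ^*(G')(σ) = λ ∘ G'(σ)` and
`B_{λ^*(G')}(h,k) = B_{G'}(h, K(λ)(k))`. -/
def OpenGame.pull {X' S' Y' R' Y R : Type} (l : Lens Y' R' Y R) (G' : OpenGame X' S' Y' R') :
    OpenGame X' S' Y R where
  Strat := G'.Strat
  play := fun σ => l.comp (G'.play σ)
  B := fun h k σ σ' => G'.B h (l.K k) σ σ'

/-- The cartesian lift of a lens `λ : Ψ' → Ψ` at a game `G'` with `t(G') = Ψ'`:
the morphism `(id, λ, id) : λ^*(G') → G'`. -/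
def OpenGame.pullLift {X' S' Y' R' Y R : Type} (l : Lens Y' R' Y R)
    (G' : OpenGame X' S' Y' R') : OGMor (G'.pull l) G' where
  s := Lens.id X' S'
  t := l
  f := fun σ => σ
  comm := fun _ => rfl
  best := fun _ _ _ _ hB => hB

/-- Pullback of an open game `G'` along a function `φ : T → Σ(G')` on strategy profiles. -/
def OpenGame.pullStrat {X S Y R : Type} {T : Type} (G' : OpenGame X S Y R)
    (φ : T → G'.Strat) : OpenGame X S Y R where
  Strat := T
  play := fun σ => G'.play (φ σ)
  B := fun h k σ σ' => G'.B h k (φ σ) (φ σ')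

/-- The cartesian lift of a function `φ : T → Σ(G')` at `G'`:
the morphism `(id, id, φ) : φ^*(G') → G'`. -/
def OpenGame.pullStratLift {X S Y R : Type} {T : Type} (G' : OpenGame X S Y R)
    (φ : T → G'.Strat) : OGMor (G'.pullStrat φ) G' where
  s := Lens.id X S
  t := Lens.id Y R
  f := φ
  comm := fun _ => rfl
  best := fun _ _ _ _ hB => hB

@[ext]
theorem OGMor.ext {X S Y R X' S' Y' R' : Type}
    {G : OpenGame X S Y R} {G' : OpenGame X' S' Y' R'} {α β : OGMor G G'}
    (hs : α.s = β.s) (ht : α.t = β.t) (hf : α.f = β.f) : α = β := by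
  cases α; cases β; subst hs ht hf; rfl

namespace OpenGame

section Push

variable {X S Y R Z Q W T Z' Q' : Type} {l : Lens X S Y R} {G : OpenGame Y R Z Q}
  {H : OpenGame W T Z' Q'}

def pushFactor (γ : OGMor G H) (μ : Lens W T X S) (hγ : γ.s = l.comp μ) :
    OGMor (G.push l) H where
  s := μ
  t := γ.t
  f := γ.f
  comm σ := by
    show ((G.play σ).comp l).comp μ = _
    rw [Lens.comp_assoc, ← hγ]
    exact γ.comm σ
  best h k σ σ' hB := γ.best h k σ σ' (by rw [hγ]; exact hB)

theorem pushLift_opcartesian (γ : OGMor G H) (μ : Lens W T X S) (hγ : γ.s = l.comp μ) :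
    ∃! δ : OGMor (G.push l) H, δ.s = μ ∧ δ.vcomp (G.pushLift l) = γ :=
  -- `(Lens.id _ _).comp δ.t` is `δ.t` by structure eta, so `hδ` pins down `δ.t` and `δ.f`.
  ⟨pushFactor γ μ hγ, ⟨rfl, OGMor.ext hγ.symm rfl rfl⟩,
    fun _ ⟨hs, hδ⟩ => OGMor.ext hs (congrArg OGMor.t hδ :) (congrArg OGMor.f hδ :)⟩

end Push

section Pull

variable {X' S' Y' R' Y R W T Z Q : Type} {l : Lens Y' R' Y R} {G' : OpenGame X' S' Y' R'}
  {H : OpenGame W T Z Q}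

def pullFactor (γ : OGMor H G') (μ : Lens Y R Z Q) (hγ : γ.t = μ.comp l) :
    OGMor H (G'.pull l) where
  s := γ.s
  t := μ
  f := γ.f
  comm σ := by
    show _ = μ.comp (l.comp (G'.play (γ.f σ)))
    rw [← Lens.comp_assoc, ← hγ]
    exact γ.comm σ
  best h k σ σ' hB := by
    show G'.B h ((μ.comp l).K k) _ _
    rw [← hγ]
    exact γ.best h k σ σ' hB

theorem pullLift_cartesian (γ : OGMor H G') (μ : Lens Y R Z Q) (hγ : γ.t = μ.comp l) :
    ∃! δ : OGMor H (G'.pull l), δ.t = μ ∧ (G'.pullLift l).vcomp δ = γ :=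
  ⟨pullFactor γ μ hγ, ⟨rfl, OGMor.ext rfl hγ.symm rfl⟩,
    fun _ ⟨ht, hδ⟩ => OGMor.ext (congrArg OGMor.s hδ :) ht (congrArg OGMor.f hδ :)⟩

end Pull

section PullStrat

variable {X S Y R W T W' T' T0 : Type} {G' : OpenGame X S Y R} {φ : T0 → G'.Strat}
  {H : OpenGame W T W' T'}

def pullStratFactor (γ : OGMor H G') (g : H.Strat → T0) (hγ : γ.f = φ ∘ g) :
    OGMor H (G'.pullStrat φ) where
  s := γ.s
  t := γ.t
  f := g
  comm σ := by
    show _ = γ.t.comp (G'.play ((φ ∘ g) σ))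
    rw [← hγ]
    exact γ.comm σ
  best h k σ σ' hB := by
    show G'.B h _ ((φ ∘ g) σ) ((φ ∘ g) σ')
    rw [← hγ]
    exact γ.best h k σ σ' hB

theorem pullStratLift_cartesian (γ : OGMor H G') (g : H.Strat → T0) (hγ : γ.f = φ ∘ g) :
    ∃! δ : OGMor H (G'.pullStrat φ), δ.f = g ∧ (G'.pullStratLift φ).vcomp δ = γ :=
  ⟨pullStratFactor γ g hγ, ⟨rfl, OGMor.ext rfl rfl hγ.symm⟩,
    fun _ ⟨hf, hδ⟩ => OGMor.ext (congrArg OGMor.s hδ :) (congrArg OGMor.t hδ :) hf⟩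

end PullStrat

end OpenGame

/-- `s : Game_v → Lensᵒᵖ` is an opfibration, `t : Game_v → Lensᵒᵖ` is a fibration, and
`Σ : Game_v → Set` is a fibration, with the (op)cartesian lifts given explicitly by
`pushLift`, `pullLift` and `pullStratLift`. -/
theorem source_target_strategy_fibrations :
    -- s is an opfibration: `pushLift l G : G → l_!(G)` is opcartesian
    (∀ (X S Y R Z Q W T Z' Q' : Type) (l : Lens X S Y R) (G : OpenGame Y R Z Q)
      (H : OpenGame W T Z' Q') (γ : OGMor G H) (μ : Lens W T X S),
      γ.s = l.comp μ →
        ∃! δ : OGMor (G.push l) H, δ.s = μ ∧ δ.vcomp (G.pushLift l) = γ) ∧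
    -- t is a fibration: `pullLift l G' : l^*(G') → G'` is cartesian
    (∀ (X' S' Y' R' Y R W T Z Q : Type) (l : Lens Y' R' Y R) (G' : OpenGame X' S' Y' R')
      (H : OpenGame W T Z Q) (γ : OGMor H G') (μ : Lens Y R Z Q),
      γ.t = μ.comp l →
        ∃! δ : OGMor H (G'.pull l), δ.t = μ ∧ (G'.pullLift l).vcomp δ = γ) ∧
    -- Σ is a fibration: `pullStratLift G' φ : φ^*(G') → G'` is cartesian
    (∀ (X S Y R W T W' T' : Type) (T0 : Type) (G' : OpenGame X S Y R)
      (φ : T0 → G'.Strat) (H : OpenGame W T W' T') (γ : OGMor H G')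
      (g : H.Strat → T0),
      γ.f = φ ∘ g →
        ∃! δ : OGMor H (G'.pullStrat φ), δ.f = g ∧ (G'.pullStratLift φ).vcomp δ = γ) :=
  ⟨fun _ _ _ _ _ _ _ _ _ _ _ _ _ γ μ hγ => OpenGame.pushLift_opcartesian γ μ hγ,
    fun _ _ _ _ _ _ _ _ _ _ _ _ _ γ μ hγ => OpenGame.pullLift_cartesian γ μ hγ,
    fun _ _ _ _ _ _ _ _ _ _ _ _ γ g hγ => OpenGame.pullStratLift_cartesian γ g hγ⟩
end

section
/- For every open game G : Φ ⇸ Ψ, there is a bijection between the set of pairs (σ,k) where k ∈ K(Ψ) and σ is a state of G over k, and the set of morphisms of open games u(I) → G. The morphism corresponding to (σ,k) has t-component the lens Ψ → I corresponding to k, s-component the lens Φ → I corresponding to K(G(σ))(k), and Σ-component * ↦ σ. This bijection is natural in G, so the states functor St is naturally isomorphic to Hom_{Game_v}(u(I), -). -/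
/-- The identity open game `u(I)` on the monoidal unit diset `I = ({*},{*})`. -/
def unitGame : OpenGame PUnit PUnit PUnit PUnit where
  Strat := PUnit
  play := fun _ => Lens.id PUnit PUnit
  B := fun _ _ _ _ => True

/-- The set of states of an open game: pairs `(σ, k)` with `σ` a state over `k`. -/
def OpenGame.States {X S Y R : Type} (G : OpenGame X S Y R) : Type :=
  { p : G.Strat × (Y → R) // G.IsState p.1 p.2 }

/-- The functorial action of `St` on a morphism of open games. -/
def OpenGame.States.map {X S Y R X' S' Y' R' : Type}
    {G : OpenGame X S Y R} {G' : OpenGame X' S' Y' R'} (α : OGMor G G')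
    (p : G.States) : G'.States :=
  ⟨(α.f p.1.1, α.t.K p.1.2), fun h => α.best h p.1.2 p.1.1 p.1.1 (p.2 (α.s.v h))⟩

/-- The morphism `u(I) → G` corresponding to a state `(σ, k)` of `G`:
its `t`-component is the lens `Ψ → I` corresponding to `k`, its `s`-component is the lens
`Φ → I` corresponding to `K(G(σ))(k)`, and its `Σ`-component is `* ↦ σ`. -/
def stateToMor {X S Y R : Type} (G : OpenGame X S Y R) (p : G.States) :
    OGMor unitGame G where
  s := ⟨fun _ => PUnit.unit, fun x _ => (G.play p.1.1).K p.1.2 x⟩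
  t := ⟨fun _ => PUnit.unit, fun y _ => p.1.2 y⟩
  f := fun _ => p.1.1
  comm := fun _ => rfl
  best := fun h _ _ _ _ => p.2 h

attribute [ext] Lens OGMor

namespace Lens

variable {X S : Type}

def toUnit (k : X → S) : Lens X S PUnit PUnit := ⟨fun _ => PUnit.unit, fun x _ => k x⟩

def cont (l : Lens X S PUnit PUnit) : X → S := l.K fun _ => PUnit.unit

theorem toUnit_cont (l : Lens X S PUnit PUnit) : toUnit l.cont = l := by
  ext x r
  cases r
  rfl

end Lens

namespace OGMor

variable {X S Y R X' S' Y' R' : Type} {G : OpenGame X S Y R} {G' : OpenGame X' S' Y' R'}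

theorem K_s_K_play (α : OGMor G G') (σ : G.Strat) (k : Y → R) :
    α.s.K ((G.play σ).K k) = (G'.play (α.f σ)).K (α.t.K k) := by
  rw [← Lens.K_comp, α.comm, Lens.K_comp]

def toState (m : OGMor unitGame G) : G.States :=
  ⟨(m.f PUnit.unit, m.t.cont),
    fun h => m.best h (fun _ => PUnit.unit) PUnit.unit PUnit.unit trivial⟩

end OGMor

section

variable {X S Y R X' S' Y' R' : Type}

theorem toState_stateToMor (G : OpenGame X S Y R) (p : G.States) :
    (stateToMor G p).toState = p := rfl

theorem stateToMor_toState {G : OpenGame X S Y R} (m : OGMor unitGame G) :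
    stateToMor G m.toState = m := by
  ext : 1
  · rw [← m.s.toUnit_cont]
    exact congrArg Lens.toUnit (m.K_s_K_play PUnit.unit fun _ => PUnit.unit).symm
  · exact m.t.toUnit_cont
  · rfl

def statesEquivMor (G : OpenGame X S Y R) : G.States ≃ OGMor unitGame G where
  toFun := stateToMor G
  invFun := OGMor.toState
  left_inv := toState_stateToMor G
  right_inv := stateToMor_toState

theorem vcomp_stateToMor {G : OpenGame X S Y R} {G' : OpenGame X' S' Y' R'}
    (α : OGMor G G') (p : G.States) :
    α.vcomp (stateToMor G p) = stateToMor G' (OpenGame.States.map α p) := by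
  ext : 1
  · exact congrArg Lens.toUnit (α.K_s_K_play p.1.1 p.1.2)
  · rfl
  · rfl

end

/-- For every open game `G`, the map sending a state `(σ, k)` of `G` to the morphism
`u(I) → G` above is a bijection `St(G) ≅ Hom_{Game_v}(u(I), G)`, natural in `G`:
the states functor is naturally isomorphic to `Hom_{Game_v}(u(I), -)`. -/
theorem states_representable :
    (∀ (X S Y R : Type) (G : OpenGame X S Y R), Function.Bijective (stateToMor G)) ∧
    (∀ (X S Y R X' S' Y' R' : Type) (G : OpenGame X S Y R) (G' : OpenGame X' S' Y' R')
      (α : OGMor G G') (p : G.States),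
      α.vcomp (stateToMor G p) = stateToMor G' (OpenGame.States.map α p)) :=
  ⟨fun _ _ _ _ G => (statesEquivMor G).bijective,
    fun _ _ _ _ _ _ _ _ _ _ => vcomp_stateToMor⟩
end
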